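/- Let ũ = (u_1,…,u_n) ∈ tder_n. The following are equivalent: (i) ρ(ũ)(x_1+⋯+x_n) = 0 (i.e. ũ ∈ sder_n); (ii) ∂_j u_i = ∂^i u_j for all 1 ≤ i, j ≤ n; (iii) ρ(ũ)(η_gr(a,b)) = η_gr(ρ(ũ)(a), b) + η_gr(a, ρ(ũ)(b)) for all a, b ∈ ass_n. -/

import Mathlib

noncomputable section

open scoped TensorProduct

attribute [instance 100] LieRing.ofAssociativeRing

/-- The free unital associative algebra over `ℚ` on `N` generators. -/
abbrev Ass (N : ℕ) : Type := FreeAlgebra ℚ (Fin N)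

/-- The `i`-th generator `x_i`. -/
def gen {N : ℕ} (i : Fin N) : Ass N := FreeAlgebra.ι ℚ i

/-- The monomial (word) associated to a list of generator indices. -/
def wordProd {N : ℕ} (l : List (Fin N)) : Ass N := (l.map gen).prod

/-- Extend a function on words (monomials) to a `ℚ`-linear map on the free algebra,
using the monomial basis. -/
def liftWord {N : ℕ} {A : Type} [AddCommGroup A] [Module ℚ A]
    (f : List (Fin N) → A) : Ass N →ₗ[ℚ] A :=
  (FreeAlgebra.basisFreeMonoid ℚ (Fin N)).constr ℚ fun w => f w.toList

/-- `μ_gr` on a word. -/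
def muWord {N : ℕ} : List (Fin N) → Ass N
  | [] => 0
  | [_] => 0
  | a :: b :: t => (if a = b then -(wordProd (a :: t)) else 0) + gen a * muWord (b :: t)

/-- The linearized self-intersection operation `μ_gr`. -/
def muGr (N : ℕ) : Ass N →ₗ[ℚ] Ass N := liftWord muWord

/-- The antipode: the anti-automorphism `ι` with `ι(x_i) = -x_i`, as a linear map. -/
def iotaMap (N : ℕ) : Ass N →ₗ[ℚ] Ass N :=
  liftWord fun l => ((-1 : ℚ) ^ l.length) • wordProd l.reverse

/-- The (right) partial derivative `∂_i`, characterized on `lie_N` by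
`a = Σ_i (∂_i a) x_i`. -/
def partialD {N : ℕ} (i : Fin N) : Ass N →ₗ[ℚ] Ass N :=
  liftWord fun l =>
    match l.getLast? with
    | some a => if a = i then wordProd l.dropLast else 0
    | none => 0

/-- `η_gr` on a pair of words. -/
def etaWord {N : ℕ} (l r : List (Fin N)) : Ass N :=
  match l.getLast?, r with
  | some a, b :: t => if a = b then -(wordProd (l.dropLast ++ a :: t)) else 0
  | _, _ => 0

/-- The linearized homotopy intersection form `η_gr`. -/
def etaGr (N : ℕ) : Ass N →ₗ[ℚ] Ass N →ₗ[ℚ] Ass N :=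
  liftWord fun l => liftWord fun r => etaWord l r

/-- Degree-`k` homogeneous part of a free algebra (word-length grading). -/
def homogS (X : Type) (k : ℕ) : Submodule ℚ (FreeAlgebra ℚ X) :=
  Submodule.span ℚ {z | ∃ l : List X, l.length = k ∧ z = (l.map (FreeAlgebra.ι ℚ)).prod}

/-- The projection onto the degree-`k` homogeneous component. -/
def homogComp {N : ℕ} (k : ℕ) : Ass N →ₗ[ℚ] Ass N :=
  liftWord fun l => if l.length = k then wordProd l else 0

/-- The free Lie algebra on `x_1, …, x_N`, as the Lie subalgebra of `Ass N`
(with the commutator bracket) generated by the generators. -/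
def lieN (N : ℕ) : LieSubalgebra ℚ (Ass N) :=
  LieSubalgebra.lieSpan ℚ (Ass N) (Set.range (gen (N := N)))

/-- The generator `x_i` as an element of `lie_N`. -/
def genL (N : ℕ) (i : Fin N) : lieN N :=
  ⟨gen i, LieSubalgebra.subset_lieSpan ⟨i, rfl⟩⟩

/-- Substitution: the algebra endomorphism of `ass_2` with `x ↦ p`, `y ↦ q`. -/
def sub2 (p q : Ass 2) : Ass 2 →ₐ[ℚ] Ass 2 := FreeAlgebra.lift ℚ ![p, q]

/-- `x`. -/
def xA : Ass 2 := gen 0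
/-- `y`. -/
def yA : Ass 2 := gen 1

/-- Equation (E1): `φ(y,0) − φ(x+y,0) = 0`. -/
def E1 (φ : Ass 2) : Prop := sub2 yA 0 φ - sub2 (xA + yA) 0 φ = 0

/-- Equation (E2): `(∂_y φ) + (∂_y φ)(y,0) − (∂_y φ)(x+y,0) − R(φ) = 0`,
where `R` is the restriction of `μ_gr` to `lie_2`. -/
def E2 (φ : Ass 2) : Prop :=
  partialD 1 φ + sub2 yA 0 (partialD 1 φ) - sub2 (xA + yA) 0 (partialD 1 φ) - muGr 2 φ = 0

/-- Equation (E3): `[x, φ(y,x)] + [y, φ(x,y)] = 0`. -/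
def E3 (φ : Ass 2) : Prop := ⁅xA, sub2 yA xA φ⁆ + ⁅yA, φ⁆ = 0

/-- `ν^em(φ) = (φ(y,x), φ(x,y))`. -/
def nuEm (φ : Ass 2) : Fin 2 → Ass 2 := ![sub2 yA xA φ, φ]

/-- The space `grt_1^em` of solutions to the linearized emergent equations. -/
def grt1em : Set (Ass 2) := {φ | φ ∈ lieN 2 ∧ E1 φ ∧ E2 φ ∧ E3 φ}

/-- The derivation `ρ(ũ)` on a word. -/
def rhoWord {N : ℕ} (u : Fin N → Ass N) : List (Fin N) → Ass N
  | [] => 0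
  | a :: t => ⁅gen a, u a⁆ * wordProd t + gen a * rhoWord u t

/-- The tangential derivation `ρ(ũ)`, determined by `ρ(ũ)(x_i) = [x_i, u_i]`. -/
def rho {N : ℕ} (u : Fin N → Ass N) : Ass N →ₗ[ℚ] Ass N := liftWord (rhoWord u)

/-- The span of commutators in `ass_N`. -/
def trRel (N : ℕ) : Submodule ℚ (Ass N) :=
  Submodule.span ℚ {z | ∃ a b : Ass N, z = a * b - b * a}

/-- The trace space `tr_N = ass_N/[ass_N, ass_N]`. -/
abbrev Tr (N : ℕ) : Type := Ass N ⧸ trRel N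

/-- The projection `|·| : ass_N → tr_N`. -/
def trM (N : ℕ) : Ass N →ₗ[ℚ] Tr N := (trRel N).mkQ

/-- The divergence `div(ũ) = Σ_i |x_i (∂_i u_i)|`. -/
def divergence {N : ℕ} (u : Fin N → Ass N) : Tr N :=
  ∑ i, trM N (gen i * partialD i (u i))

/-- `ũ ∈ tder_N`: all components lie in `lie_N`. -/
def IsTDer {N : ℕ} (u : Fin N → Ass N) : Prop := ∀ i, u i ∈ lieN N

/-- `ũ ∈ sder_N`. -/
def IsSDer {N : ℕ} (u : Fin N → Ass N) : Prop := IsTDer u ∧ rho u (∑ i, gen i) = 0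

/-- `ũ ∈ krv_N`. -/
def IsKRV {N : ℕ} (u : Fin N → Ass N) : Prop :=
  IsSDer u ∧ ∃ f : Fin (N + 1) → Polynomial ℚ,
    divergence u =
      trM N (Polynomial.aeval (∑ i, gen i) (f 0)) +
        ∑ i : Fin N, trM N (Polynomial.aeval (gen i) (f i.succ))

/-- `ũ ∈ krv_N^0`. -/
def IsKRV0 {N : ℕ} (u : Fin N → Ass N) : Prop :=
  IsSDer u ∧ ∃ cf : Fin N → ℚ, divergence u = ∑ i, cf i • trM N (gen i)

/-- The swap `u(x,y) ↦ u(y,x)`. -/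
def swapA : Ass 2 →ₐ[ℚ] Ass 2 := sub2 yA xA

/-- `ũ ∈ krv_2^sym`. -/
def IsKRVsym (u : Fin 2 → Ass 2) : Prop := IsKRV u ∧ u 1 = swapA (u 0)


/-- The coproduct `Δ` on `ass_N`, with `Δ(x_i) = x_i ⊗ 1 + 1 ⊗ x_i`. -/
def comulA (N : ℕ) : Ass N →ₐ[ℚ] (Ass N ⊗[ℚ] Ass N) :=
  FreeAlgebra.lift ℚ fun i => gen i ⊗ₜ[ℚ] (1 : Ass N) + (1 : Ass N) ⊗ₜ[ℚ] gen i

/-- `μ_{r,gr} = ((|·|∘mult) ⊗ id) ∘ (id ⊗ ((ι ⊗ id) ∘ Δ)) ∘ (id ⊗ μ_gr) ∘ Δ`. -/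
def muR (N : ℕ) : Ass N →ₗ[ℚ] Tr N ⊗[ℚ] Ass N :=
  (TensorProduct.map ((trM N).comp (LinearMap.mul' ℚ (Ass N))) LinearMap.id).comp <|
    ((TensorProduct.assoc ℚ (Ass N) (Ass N) (Ass N)).symm.toLinearMap).comp <|
      (TensorProduct.map LinearMap.id
          ((TensorProduct.map (iotaMap N) LinearMap.id).comp (comulA N).toLinearMap)).comp <|
        (TensorProduct.map LinearMap.id (muGr N)).comp (comulA N).toLinearMap

/-- `Alt(a ⊗ b) = a ⊗ b - b ⊗ a`. -/
def altMap (N : ℕ) : Tr N ⊗[ℚ] Tr N →ₗ[ℚ] Tr N ⊗[ℚ] Tr N :=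
  LinearMap.id - (TensorProduct.comm ℚ (Tr N) (Tr N)).toLinearMap

/-- The linearized Turaev cobracket `δ_gr = Alt ∘ (id ⊗ |·|) ∘ μ_{r,gr}`. -/
def Dgr (N : ℕ) : Ass N →ₗ[ℚ] Tr N ⊗[ℚ] Tr N :=
  (altMap N).comp ((TensorProduct.map LinearMap.id (trM N)).comp (muR N))

/-- Index type of the generators `t_{pq}` (`p ≠ q`) of the Drinfeld–Kohno Lie algebra. -/
def dkGenIdx (N : ℕ) : Type := {pq : Fin N × Fin N // pq.1 ≠ pq.2}

abbrev FLdk (N : ℕ) := FreeLieAlgebra ℚ (dkGenIdx N)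

def tFree {N : ℕ} (p q : Fin N) (h : p ≠ q) : FLdk N := FreeLieAlgebra.of ℚ ⟨(p, q), h⟩

/-- The defining relations of `dk_N`: symmetry, commutation and 4T. -/
def dkRels (N : ℕ) : Set (FLdk N) :=
  {z | ∃ (p q : Fin N) (h : p ≠ q), z = tFree p q h - tFree q p h.symm} ∪
  {z | ∃ (p q r s : Fin N) (hpq : p ≠ q) (hrs : r ≠ s),
      p ≠ r ∧ p ≠ s ∧ q ≠ r ∧ q ≠ s ∧ z = ⁅tFree p q hpq, tFree r s hrs⁆} ∪
  {z | ∃ (p q r : Fin N) (hpq : p ≠ q) (hqr : q ≠ r) (hpr : p ≠ r),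
      z = ⁅tFree p q hpq + tFree q r hqr, tFree p r hpr⁆}

def dkIdeal (N : ℕ) : LieIdeal ℚ (FLdk N) := LieSubmodule.lieSpan ℚ (FLdk N) (dkRels N)

/-- The Drinfeld–Kohno Lie algebra `dk_N`. -/
abbrev dk (N : ℕ) := FLdk N ⧸ dkIdeal N

/-- The generator `t_{pq}` of `dk_N`. -/
def tGen {N : ℕ} (p q : Fin N) (h : p ≠ q) : dk N :=
  LieSubmodule.Quotient.mk (N := dkIdeal N) (tFree p q h)

/-- Index type of the generators of the mixed Drinfeld–Kohno Lie algebra `dk_{m,n}`: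
pairs of distinct indices in `Fin (m+n)`, not both poles (i.e., not both `< m`). -/
def MIdx (m n : ℕ) : Type :=
  {pq : Fin (m + n) × Fin (m + n) // pq.1 ≠ pq.2 ∧ (m ≤ (pq.1 : ℕ) ∨ m ≤ (pq.2 : ℕ))}

abbrev FLmix (m n : ℕ) := FreeLieAlgebra ℚ (MIdx m n)

def tMix {m n : ℕ} (p q : Fin (m + n)) (h : p ≠ q)
    (hm : m ≤ (p : ℕ) ∨ m ≤ (q : ℕ)) : FLmix m n :=
  FreeLieAlgebra.of ℚ ⟨(p, q), h, hm⟩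

/-- The defining relations of `dk_{m,n}`: exactly the symmetry, commutation and 4T relations
of `dk_{m+n}` involving only mixed pairs. -/
def mixRels (m n : ℕ) : Set (FLmix m n) :=
  {z | ∃ (p q : Fin (m + n)) (h : p ≠ q) (hm : m ≤ (p : ℕ) ∨ m ≤ (q : ℕ)),
      z = tMix p q h hm - tMix q p h.symm hm.symm} ∪
  {z | ∃ (p q r s : Fin (m + n)) (hpq : p ≠ q) (hmpq : m ≤ (p : ℕ) ∨ m ≤ (q : ℕ))
      (hrs : r ≠ s) (hmrs : m ≤ (r : ℕ) ∨ m ≤ (s : ℕ)),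
      p ≠ r ∧ p ≠ s ∧ q ≠ r ∧ q ≠ s ∧ z = ⁅tMix p q hpq hmpq, tMix r s hrs hmrs⁆} ∪
  {z | ∃ (p q r : Fin (m + n)) (hpq : p ≠ q) (hmpq : m ≤ (p : ℕ) ∨ m ≤ (q : ℕ))
      (hqr : q ≠ r) (hmqr : m ≤ (q : ℕ) ∨ m ≤ (r : ℕ))
      (hpr : p ≠ r) (hmpr : m ≤ (p : ℕ) ∨ m ≤ (r : ℕ)),
      z = ⁅tMix p q hpq hmpq + tMix q r hqr hmqr, tMix p r hpr hmpr⁆}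

def mixIdeal (m n : ℕ) : LieIdeal ℚ (FLmix m n) :=
  LieSubmodule.lieSpan ℚ (FLmix m n) (mixRels m n)

/-- The mixed Drinfeld–Kohno Lie algebra `dk_{m,n}`. -/
abbrev dkmn (m n : ℕ) := FLmix m n ⧸ mixIdeal m n

lemma castAdd_ne_natAdd {m n : ℕ} (i : Fin m) (j : Fin n) :
    Fin.castAdd n i ≠ Fin.natAdd m j := by
  intro h
  have hv := congrArg Fin.val h
  simp only [Fin.coe_castAdd, Fin.coe_natAdd] at hv
  have := i.isLt
  omega

lemma natAdd_ne {m n : ℕ} {u v : Fin n} (h : u ≠ v) :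
    Fin.natAdd m u ≠ Fin.natAdd m v := by
  intro hh
  exact h (by
    have hv := congrArg Fin.val hh
    simp only [Fin.coe_natAdd] at hv
    exact Fin.ext (by omega))

lemma natAdd_le_left (m : ℕ) {n : ℕ} (j : Fin n) : m ≤ (Fin.natAdd m j : ℕ) := by
  simp only [Fin.coe_natAdd]; omega

/-- The generator `a_{ij}` of `dk_{m,n}` (0-indexed): `a_{ij} = t_{i(m+j)}`. -/
def aG {m n : ℕ} (i : Fin m) (j : Fin n) : dkmn m n :=
  LieSubmodule.Quotient.mk (N := mixIdeal m n)
    (tMix (Fin.castAdd n i) (Fin.natAdd m j) (castAdd_ne_natAdd i j)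
      (Or.inr (natAdd_le_left m j)))

/-- The generator `c_{ij}` of `dk_{m,n}` (0-indexed): `c_{ij} = t_{(m+i)(m+j)}`. -/
def cG {m n : ℕ} (u v : Fin n) (h : u ≠ v) : dkmn m n :=
  LieSubmodule.Quotient.mk (N := mixIdeal m n)
    (tMix (Fin.natAdd m u) (Fin.natAdd m v) (natAdd_ne h)
      (Or.inl (natAdd_le_left m u)))

/-- The Lie ideal `c` of `dk_{m,n}` generated by the `c_{ij}`. -/
def cId (m n : ℕ) : LieIdeal ℚ (dkmn m n) :=
  LieSubmodule.lieSpan ℚ (dkmn m n) {z | ∃ (u v : Fin n) (h : u ≠ v), z = cG u v h}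

/-- The Lie ideal `[c,c]`. -/
def ccId (m n : ℕ) : LieIdeal ℚ (dkmn m n) := ⁅cId m n, cId m n⁆

/-- The emergent Drinfeld–Kohno Lie algebra `edk_{m,n} = dk_{m,n}/[c,c]`. -/
abbrev edk (m n : ℕ) := dkmn m n ⧸ ccId m n

/-- Projection `dk_{m,n} → edk_{m,n}` as a function. -/
def eprojF (m n : ℕ) : dkmn m n → edk m n := LieSubmodule.Quotient.mk (N := ccId m n)

/-- Projection `dk_{m,n} → edk_{m,n}` as a `ℚ`-linear map. -/
def eproj (m n : ℕ) : dkmn m n →ₗ[ℚ] edk m n := (ccId m n).toSubmodule.mkQ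

/-- `a_{ij}` in `edk_{m,n}`. -/
def aGE {m n : ℕ} (i : Fin m) (j : Fin n) : edk m n := eprojF m n (aG i j)

/-- `c_{ij}` in `edk_{m,n}`. -/
def cGE {m n : ℕ} (u v : Fin n) (h : u ≠ v) : edk m n := eprojF m n (cG u v h)

/-- The canonical Lie algebra map `FreeLieAlgebra ℚ (Fin m) → ass_m`,
whose image is `lie_m`. -/
def toAssL (m : ℕ) : FreeLieAlgebra ℚ (Fin m) →ₗ⁅ℚ⁆ FreeAlgebra ℚ (Fin m) :=
  FreeLieAlgebra.lift ℚ (FreeAlgebra.ι ℚ)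

/-- `u ↦ u_i` (at `dk` level): the Lie algebra map with `x_p ↦ a_{pi}`. -/
def uEldk {m n : ℕ} (i : Fin n) : FreeLieAlgebra ℚ (Fin m) →ₗ⁅ℚ⁆ dkmn m n :=
  FreeLieAlgebra.lift ℚ fun p => aG p i

/-- `u ↦ u_i`: the Lie algebra map `lie_m → edk_{m,n}` with `x_p ↦ a_{pi}`. -/
def uEl {m n : ℕ} (i : Fin n) : FreeLieAlgebra ℚ (Fin m) →ₗ⁅ℚ⁆ edk m n :=
  FreeLieAlgebra.lift ℚ fun p => aGE p i

/-- Iterated bracketing `[a_{p₁ j}, [a_{p₂ j}, [… , [a_{p_d j}, ξ]…]]]`. -/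
def adWApply {m n : ℕ} (j : Fin n) : List (Fin m) → edk m n → edk m n
  | [], ξ => ξ
  | p :: t, ξ => ⁅aGE p j, adWApply j t ξ⁆


/-- `w ↦ w_{uv}`: the linear map `ass_m → edk_{m,n}` with
`1 ↦ c_{uv}` and `(x_{p₁}⋯x_{p_d}) ↦ [a_{p₁ v}, [… [a_{p_d v}, c_{uv}]…]]`. -/
def wEl {m n : ℕ} (u v : Fin n) (h : u ≠ v) : Ass m →ₗ[ℚ] edk m n :=
  liftWord fun l => adWApply v l (cGE u v h)

/-- `ad_w^{(l)}(ξ)`, linear in `w`. -/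
def adOp {m n : ℕ} (l : Fin n) (ξ : edk m n) : Ass m →ₗ[ℚ] edk m n :=
  liftWord fun lst => adWApply l lst ξ

/-- Degree-`k` part of the free Lie algebra (generators of degree 1), realized as the
preimage of the degree-`k` part of the free associative algebra under the canonical map. -/
def flHomog (X : Type) (k : ℕ) : Submodule ℚ (FreeLieAlgebra ℚ X) :=
  Submodule.comap
    (FreeLieAlgebra.lift ℚ (FreeAlgebra.ι ℚ (X := X)) :
      FreeLieAlgebra ℚ X →ₗ⁅ℚ⁆ FreeAlgebra ℚ X).toLinearMap
    (homogS X k)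

/-- Degree-`k` part of `edk_{m,n}`. -/
def edkHomog (m n : ℕ) (k : ℕ) : Submodule ℚ (edk m n) :=
  (((flHomog (MIdx m n) k).map (mixIdeal m n).toSubmodule.mkQ)).map (eproj m n)

-- Fin helper lemmas
lemma castSucc_ne_of_ne {n : ℕ} {u v : Fin n} (h : u ≠ v) :
    Fin.castSucc u ≠ Fin.castSucc v := fun hh => h (Fin.castSucc_injective n hh)

lemma succ_ne_of_ne {n : ℕ} {u v : Fin n} (h : u ≠ v) :
    Fin.succ u ≠ Fin.succ v := fun hh => h (Fin.succ_injective n hh)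

lemma castSucc_ne_last {n : ℕ} (u : Fin n) : Fin.castSucc u ≠ Fin.last n :=
  (Fin.castSucc_lt_last u).ne

lemma castSucc_ne_succ_of_le {n : ℕ} {u v : Fin n} (h : u ≤ v) :
    Fin.castSucc u ≠ Fin.succ v := by
  intro hh
  have hv := congrArg Fin.val hh
  simp only [Fin.coe_castSucc, Fin.val_succ] at hv
  have := Fin.le_def.mp h
  omega

/-- `D` is the pole coface map `δ_k : dk_{m,n} → dk_{m+1,n}`, `0 ≤ k ≤ m`
(1-indexed `k`; `k = 0` is extension on the left). -/
def IsDeltaPole (m n : ℕ) (k : ℕ) (D : dkmn m n →ₗ⁅ℚ⁆ dkmn (m + 1) n) : Prop :=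
  (∀ (i : Fin m) (j : Fin n),
     (((i : ℕ) + 1 < k) → D (aG i j) = aG (Fin.castSucc i) j) ∧
     (((i : ℕ) + 1 = k) → D (aG i j) = aG (Fin.castSucc i) j + aG (Fin.succ i) j) ∧
     ((k < (i : ℕ) + 1) → D (aG i j) = aG (Fin.succ i) j)) ∧
  (∀ (u v : Fin n) (h : u ≠ v), D (cG u v h) = cG u v h)

/-- `D` is the strand coface map `δ_{m+κ} : dk_{m,n} → dk_{m,n+1}`, `1 ≤ κ ≤ n+1`
(1-indexed strand `κ`; `κ = n+1` is extension on the right). -/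
def IsDeltaStrand (m n : ℕ) (κ : ℕ) (D : dkmn m n →ₗ⁅ℚ⁆ dkmn m (n + 1)) : Prop :=
  (∀ (i : Fin m) (j : Fin n),
     (((j : ℕ) + 1 < κ) → D (aG i j) = aG i (Fin.castSucc j)) ∧
     (((j : ℕ) + 1 = κ) → D (aG i j) = aG i (Fin.castSucc j) + aG i (Fin.succ j)) ∧
     ((κ < (j : ℕ) + 1) → D (aG i j) = aG i (Fin.succ j))) ∧
  (∀ (u v : Fin n) (h : u < v),
     (((v : ℕ) + 1 < κ) →
        D (cG u v h.ne) = cG (Fin.castSucc u) (Fin.castSucc v) (castSucc_ne_of_ne h.ne)) ∧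
     (((v : ℕ) + 1 = κ) →
        D (cG u v h.ne) = cG (Fin.castSucc u) (Fin.castSucc v) (castSucc_ne_of_ne h.ne)
          + cG (Fin.castSucc u) (Fin.succ v) (castSucc_ne_succ_of_le h.le)) ∧
     (((u : ℕ) + 1 < κ ∧ κ < (v : ℕ) + 1) →
        D (cG u v h.ne) = cG (Fin.castSucc u) (Fin.succ v) (castSucc_ne_succ_of_le h.le)) ∧
     (((u : ℕ) + 1 = κ) →
        D (cG u v h.ne) = cG (Fin.castSucc u) (Fin.succ v) (castSucc_ne_succ_of_le h.le)
          + cG (Fin.succ u) (Fin.succ v) (succ_ne_of_ne h.ne)) ∧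
     ((κ < (u : ℕ) + 1) →
        D (cG u v h.ne) = cG (Fin.succ u) (Fin.succ v) (succ_ne_of_ne h.ne)))

/-- `T` is `ϑ_{m+1} : dk_{m+1,n} → dk_{m,n+1}` (the last pole becomes the first strand). -/
def IsTheta (m n : ℕ) (T : dkmn (m + 1) n →ₗ⁅ℚ⁆ dkmn m (n + 1)) : Prop :=
  (∀ (i : Fin (m + 1)) (j : Fin n),
     (∀ hi : (i : ℕ) < m, T (aG i j) = aG ⟨i, hi⟩ (Fin.succ j)) ∧
     ((i : ℕ) = m → T (aG i j) = cG 0 (Fin.succ j) (Fin.succ_ne_zero j).symm)) ∧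
  (∀ (u v : Fin n) (h : u ≠ v), T (cG u v h) = cG (Fin.succ u) (Fin.succ v) (succ_ne_of_ne h))

/-- The coface map `d_k : dk_{m,n} → dk_{m,n+1}`, built from the data of the pole
cofaces, the strand cofaces, and `ϑ_{m+1}`. -/
def coface (m n : ℕ) (Dp : ℕ → (dkmn m n →ₗ⁅ℚ⁆ dkmn (m + 1) n))
    (Ds : ℕ → (dkmn m n →ₗ⁅ℚ⁆ dkmn m (n + 1)))
    (T : dkmn (m + 1) n →ₗ⁅ℚ⁆ dkmn m (n + 1)) (k : ℕ) :
    dkmn m n →ₗ⁅ℚ⁆ dkmn m (n + 1) :=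
  if k ≤ m then T.comp (Dp k) else Ds (k - m)

/-- The algebra map `ass_{m'+1} → ass_{m'}` with `x_p ↦ x_p` (`p < m'`) and `x_{m'} ↦ 0`. -/
def setLast0A (m' : ℕ) : Ass (m' + 1) →ₐ[ℚ] Ass m' :=
  FreeAlgebra.lift ℚ fun p : Fin (m' + 1) =>
    if h : (p : ℕ) < m' then gen ⟨p, h⟩ else 0

/-- The Lie algebra map `FreeLie (Fin (m'+1)) → FreeLie (Fin m')` setting the last
generator to `0`. -/
def flSetLast0 (m' : ℕ) : FreeLieAlgebra ℚ (Fin (m' + 1)) →ₗ⁅ℚ⁆ FreeLieAlgebra ℚ (Fin m') :=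
  FreeLieAlgebra.lift ℚ fun p : Fin (m' + 1) =>
    if h : (p : ℕ) < m' then FreeLieAlgebra.of ℚ ⟨p, h⟩ else 0

/-!
Write `X = x_1 + ⋯ + x_n` and `ε` for the counit. Both `η_gr` and the defect
`(a, b) ↦ ρ(η_gr(a, b)) - η_gr(ρ a, b) - η_gr(a, ρ b)` are Fox pairings in the sense of
Massuyeau–Turaev: `B(ac, b) = a B(c, b) + ε(c) B(a, b)` and `B(a, cb) = B(a, c) b + ε(c) B(a, b)`.
A Fox pairing is determined by its values on pairs of generators, and the defect takes the value
`x_p (∂_q u_p - ∂^p u_q) x_q` on `(x_p, x_q)`; hence (ii) ⇒ (iii).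
For (i) ⇔ (ii): since `ε(ρ X) = 0`, `ρ X` vanishes iff all its `∂_i` do, and using
`u_i = Σ_k x_k ∂^k u_i` (valid on `lie_n`) one finds `∂_i ρ(X) = Σ_k x_k (∂_i u_k - ∂^k u_i)`.
For (iii) ⇒ (i): `η_gr(X, b) = ε(b) - b` and `η_gr(a, X) = ε(a) - a`, so (iii) at `a = b = X`
reads `-ρ X = -2 ρ X`.
-/

open FreeAlgebra (algebraMapInv)

section Words

variable {N : ℕ}

@[simp] lemma wordProd_nil : wordProd ([] : List (Fin N)) = 1 := rfl

@[simp] lemma wordProd_cons (a : Fin N) (l : List (Fin N)) :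
    wordProd (a :: l) = gen a * wordProd l := by
  simp [wordProd]

lemma wordProd_append (l m : List (Fin N)) :
    wordProd (l ++ m) = wordProd l * wordProd m := by
  simp [wordProd]

lemma wordProd_concat (l : List (Fin N)) (a : Fin N) :
    wordProd (l ++ [a]) = wordProd l * gen a := by
  simp [wordProd_append]

lemma basisFreeMonoid_apply (w : FreeMonoid (Fin N)) :
    FreeAlgebra.basisFreeMonoid ℚ (Fin N) w = wordProd w.toList := by
  unfold FreeAlgebra.basisFreeMonoid FreeAlgebra.equivMonoidAlgebraFreeMonoid
  simp only [Module.Basis.map_apply, Finsupp.coe_basisSingleOne]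
  erw [MonoidAlgebra.lift_single, FreeMonoid.lift_apply]
  rw [one_smul]
  rfl

lemma liftWord_wordProd {A : Type} [AddCommGroup A] [Module ℚ A] (f : List (Fin N) → A)
    (l : List (Fin N)) : liftWord f (wordProd l) = f l := by
  have h := (FreeAlgebra.basisFreeMonoid ℚ (Fin N)).constr_basis ℚ (fun w => f w.toList)
    (FreeMonoid.ofList l)
  rwa [basisFreeMonoid_apply, FreeMonoid.toList_ofList] at h

lemma induction_on_words {P : Ass N → Prop} (word : ∀ l, P (wordProd l))
    (add : ∀ a b, P a → P b → P (a + b)) (smul : ∀ (r : ℚ) a, P a → P (r • a))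
    (a : Ass N) : P a := by
  have ha : a ∈ Submodule.span ℚ (Set.range (wordProd (N := N))) := by
    refine Submodule.span_mono ?_ ((FreeAlgebra.basisFreeMonoid ℚ (Fin N)).mem_span a)
    rintro _ ⟨w, rfl⟩
    exact ⟨w.toList, (basisFreeMonoid_apply w).symm⟩
  induction ha using Submodule.span_induction with
  | mem x hx => obtain ⟨l, rfl⟩ := hx; exact word l
  | zero => simpa using smul 0 _ (word [])
  | add x y _ _ hx hy => exact add x y hx hy
  | smul r x _ hx => exact smul r x hx

end Words

section Antipode

variable {N : ℕ}

lemma algebraMapInv_gen (i : Fin N) : algebraMapInv (gen i) = (0 : ℚ) := by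
  simp [gen, FreeAlgebra.algebraMapInv]

lemma iotaMap_wordProd (l : List (Fin N)) :
    iotaMap N (wordProd l) = ((-1 : ℚ) ^ l.length) • wordProd l.reverse :=
  liftWord_wordProd _ l

lemma iotaMap_one : iotaMap N 1 = 1 := by
  simpa using iotaMap_wordProd ([] : List (Fin N))

lemma iotaMap_gen (i : Fin N) : iotaMap N (gen i) = -gen i := by
  simpa using iotaMap_wordProd [i]

lemma iotaMap_mul (a b : Ass N) : iotaMap N (a * b) = iotaMap N b * iotaMap N a := by
  induction a using induction_on_words with
  | add x y hx hy => simp [add_mul, mul_add, hx, hy]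
  | smul r x hx => simp [hx]
  | word l =>
    induction b using induction_on_words with
    | add x y hx hy => simp [add_mul, mul_add, hx, hy]
    | smul r x hx => simp [hx]
    | word m =>
      rw [← wordProd_append, iotaMap_wordProd, iotaMap_wordProd, iotaMap_wordProd,
        List.reverse_append, List.length_append, wordProd_append, smul_mul_smul_comm,
        pow_add, mul_comm]

lemma iotaMap_algebraMap (r : ℚ) : iotaMap N (algebraMap ℚ (Ass N) r) = algebraMap ℚ _ r := by
  rw [Algebra.algebraMap_eq_smul_one, map_smul, iotaMap_one]

lemma iotaMap_iotaMap (a : Ass N) : iotaMap N (iotaMap N a) = a := by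
  induction a using FreeAlgebra.induction with
  | grade0 r => rw [iotaMap_algebraMap, iotaMap_algebraMap]
  | grade1 i => rw [← gen, iotaMap_gen, map_neg, iotaMap_gen, neg_neg]
  | mul a b ha hb => rw [iotaMap_mul, iotaMap_mul, ha, hb]
  | add a b ha hb => rw [map_add, map_add, ha, hb]

lemma algebraMapInv_iotaMap (a : Ass N) : algebraMapInv (iotaMap N a) = algebraMapInv a := by
  induction a using FreeAlgebra.induction with
  | grade0 r => rw [iotaMap_algebraMap]
  | grade1 i => rw [← gen, iotaMap_gen, map_neg, algebraMapInv_gen, neg_zero]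
  | mul a b ha hb => rw [iotaMap_mul, map_mul, map_mul, ha, hb, mul_comm]
  | add a b ha hb => rw [map_add, map_add, ha, hb, map_add]

end Antipode

section PartialDerivative

variable {N : ℕ}

lemma partialD_wordProd_concat (i : Fin N) (t : List (Fin N)) (a : Fin N) :
    partialD i (wordProd (t ++ [a])) = if a = i then wordProd t else 0 := by
  simp [partialD, liftWord_wordProd]

lemma partialD_one (i : Fin N) : partialD i (1 : Ass N) = 0 := by
  rw [← wordProd_nil, partialD, liftWord_wordProd]
  rfl

lemma partialD_mul (i : Fin N) (a b : Ass N) :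
    partialD i (a * b) = a * partialD i b + algebraMapInv b • partialD i a := by
  induction a using induction_on_words with
  | add x y hx hy => simp only [add_mul, map_add, hx, hy, smul_add]; abel
  | smul r x hx => simp only [smul_mul_assoc, map_smul, hx, smul_add, smul_comm r]
  | word l =>
    induction b using induction_on_words with
    | add x y hx hy => simp only [mul_add, map_add, hx, hy, add_smul]; abel
    | smul r x hx => simp only [mul_smul_comm, map_smul, hx, smul_add, smul_assoc]
    | word m =>
      rcases m.eq_nil_or_concat with rfl | ⟨t, c, rfl⟩
      · simp [partialD_one]
      · rw [List.concat_eq_append, ← wordProd_append, ← List.append_assoc, partialD_wordProd_concat,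
          partialD_wordProd_concat, wordProd_concat, map_mul, algebraMapInv_gen]
        simp [wordProd_append]

lemma partialD_gen (i k : Fin N) : partialD i (gen k) = if k = i then 1 else 0 := by
  simpa using partialD_wordProd_concat i [] k

lemma partialD_mul_gen (i k : Fin N) (a : Ass N) :
    partialD i (a * gen k) = if k = i then a else 0 := by
  simp [partialD_mul, partialD_gen, algebraMapInv_gen]

lemma sum_partialD_mul_gen (a : Ass N) :
    ∑ i, partialD i a * gen i = a - algebraMapInv a • 1 := by
  induction a using induction_on_words with
  | add x y hx hy => simp only [map_add, add_mul, Finset.sum_add_distrib, hx, hy, add_smul]; abel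
  | smul r x hx => simp only [map_smul, smul_mul_assoc, ← Finset.smul_sum, hx, smul_sub,
      smul_assoc]
  | word l =>
    rcases l.eq_nil_or_concat with rfl | ⟨t, c, rfl⟩
    · simp [partialD_one]
    · simp [wordProd_concat, partialD_mul_gen, algebraMapInv_gen]

lemma sum_gen_mul_iotaMap_partialD_iotaMap (b : Ass N) :
    ∑ i, gen i * iotaMap N (partialD i (iotaMap N b)) = algebraMapInv b • 1 - b := by
  have h := congrArg (iotaMap N) (sum_partialD_mul_gen (iotaMap N b))
  simp only [map_sum, iotaMap_mul, iotaMap_gen, neg_mul, Finset.sum_neg_distrib, map_sub,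
    map_smul, iotaMap_iotaMap, iotaMap_one, algebraMapInv_iotaMap] at h
  rw [← neg_sub, ← h, neg_neg]

lemma eq_zero_of_sum_gen_mul_eq_zero {c : Fin N → Ass N} (h : ∑ k, gen k * c k = 0)
    (k : Fin N) : c k = 0 := by
  have hk := congrArg (fun z => partialD k (iotaMap N z)) h
  simp only [map_sum, iotaMap_mul, iotaMap_gen, mul_neg, partialD_mul_gen, map_neg,
    Finset.sum_neg_distrib, Finset.sum_ite_eq', Finset.mem_univ, if_true, map_zero,
    neg_eq_zero] at hk
  rw [← iotaMap_iotaMap (c k), hk, map_zero]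

lemma eq_zero_iff_forall_partialD_eq_zero {a : Ass N} (ha : algebraMapInv a = 0) :
    a = 0 ↔ ∀ i, partialD i a = 0 := by
  refine ⟨fun h i => by rw [h, map_zero], fun h => ?_⟩
  have hsum := sum_partialD_mul_gen a
  simp only [h, zero_mul, Finset.sum_const_zero, ha, zero_smul, sub_zero] at hsum
  exact hsum.symm

end PartialDerivative

section FreeLie

variable {N : ℕ}

lemma algebraMapInv_eq_zero_of_mem_lieN {a : Ass N} (ha : a ∈ lieN N) :
    algebraMapInv a = 0 := by
  induction ha using LieSubalgebra.lieSpan_induction with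
  | mem x hx => obtain ⟨i, rfl⟩ := hx; exact algebraMapInv_gen i
  | zero => exact map_zero _
  | add x y _ _ hx hy => rw [map_add, hx, hy, add_zero]
  | smul r x _ hx => rw [map_smul, hx, smul_zero]
  | lie x y _ _ _ _ => rw [Ring.lie_def, map_sub, map_mul, map_mul, mul_comm, sub_self]

lemma iotaMap_eq_neg_of_mem_lieN {a : Ass N} (ha : a ∈ lieN N) : iotaMap N a = -a := by
  induction ha using LieSubalgebra.lieSpan_induction with
  | mem x hx => obtain ⟨i, rfl⟩ := hx; exact iotaMap_gen i
  | zero => rw [map_zero, neg_zero]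
  | add x y _ _ hx hy => rw [map_add, hx, hy, neg_add]
  | smul r x _ hx => rw [map_smul, hx, smul_neg]
  | lie x y _ _ hx hy =>
    rw [Ring.lie_def, map_sub, iotaMap_mul, iotaMap_mul, hx, hy]
    noncomm_ring

lemma sum_gen_mul_iotaMap_partialD_of_mem_lieN {a : Ass N} (ha : a ∈ lieN N) :
    ∑ i, gen i * iotaMap N (partialD i a) = a := by
  have h := sum_gen_mul_iotaMap_partialD_iotaMap a
  simp only [iotaMap_eq_neg_of_mem_lieN ha, map_neg, mul_neg, Finset.sum_neg_distrib,
    algebraMapInv_eq_zero_of_mem_lieN ha, zero_smul, zero_sub, neg_inj] at h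
  exact h

end FreeLie

section TangentialDerivation

variable {N : ℕ} (u : Fin N → Ass N)

lemma rhoWord_append (l m : List (Fin N)) :
    rhoWord u (l ++ m) = rhoWord u l * wordProd m + wordProd l * rhoWord u m := by
  induction l with
  | nil => simp [rhoWord]
  | cons a t ih =>
    simp only [List.cons_append, rhoWord, ih, wordProd_cons, wordProd_append]
    noncomm_ring

lemma rho_mul (a b : Ass N) : rho u (a * b) = rho u a * b + a * rho u b := by
  induction a using induction_on_words with
  | add x y hx hy => simp only [add_mul, map_add, hx, hy]; abel
  | smul r x hx => simp only [smul_mul_assoc, map_smul, hx, smul_add]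
  | word l =>
    induction b using induction_on_words with
    | add x y hx hy => simp only [mul_add, map_add, hx, hy]; abel
    | smul r x hx => simp only [mul_smul_comm, map_smul, hx, smul_add]
    | word m => simp only [← wordProd_append, rho, liftWord_wordProd, rhoWord_append]

lemma rho_gen (i : Fin N) : rho u (gen i) = ⁅gen i, u i⁆ := by
  have h : rho u (wordProd [i]) = rhoWord u [i] := liftWord_wordProd _ _
  simpa [rhoWord] using h

lemma rho_algebraMap (r : ℚ) : rho u (algebraMap ℚ (Ass N) r) = 0 := by
  have h : rho u (wordProd []) = rhoWord u [] := liftWord_wordProd _ _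
  rw [Algebra.algebraMap_eq_smul_one, map_smul, ← wordProd_nil, h, rhoWord, smul_zero]

lemma algebraMapInv_rho (a : Ass N) : algebraMapInv (rho u a) = 0 := by
  induction a using FreeAlgebra.induction with
  | grade0 r => rw [rho_algebraMap, map_zero]
  | grade1 i => rw [← gen, rho_gen, Ring.lie_def, map_sub, map_mul, map_mul, mul_comm, sub_self]
  | mul a b ha hb => rw [rho_mul, map_add, map_mul, map_mul, ha, hb, zero_mul, mul_zero, add_zero]
  | add a b ha hb => rw [map_add, map_add, ha, hb, add_zero]

end TangentialDerivation

section FoxPairing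

variable {N : ℕ}

def IsFoxPairing (B : Ass N →ₗ[ℚ] Ass N →ₗ[ℚ] Ass N) : Prop :=
  (∀ a c b, B (a * c) b = a * B c b + algebraMapInv c • B a b) ∧
    ∀ a c b, B a (c * b) = B a c * b + algebraMapInv c • B a b

def derivationDefect (B : Ass N →ₗ[ℚ] Ass N →ₗ[ℚ] Ass N) (d : Ass N →ₗ[ℚ] Ass N) :
    Ass N →ₗ[ℚ] Ass N →ₗ[ℚ] Ass N :=
  B.compr₂ d - B.comp d - B.compl₂ d

lemma derivationDefect_apply (B : Ass N →ₗ[ℚ] Ass N →ₗ[ℚ] Ass N) (d : Ass N →ₗ[ℚ] Ass N)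
    (a b : Ass N) : derivationDefect B d a b = d (B a b) - B (d a) b - B a (d b) := rfl

namespace IsFoxPairing

variable {B : Ass N →ₗ[ℚ] Ass N →ₗ[ℚ] Ass N}

lemma one_left (hB : IsFoxPairing B) (b : Ass N) : B 1 b = 0 := by
  simpa [map_one] using hB.1 1 1 b

lemma one_right (hB : IsFoxPairing B) (a : Ass N) : B a 1 = 0 := by
  simpa [map_one] using hB.2 a 1 1

lemma eq_zero (hB : IsFoxPairing B) (h : ∀ p q, B (gen p) (gen q) = 0) : B = 0 := by
  have h_gen : ∀ a q, B a (gen q) = 0 := by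
    intro a q
    induction a using FreeAlgebra.induction with
    | grade0 r => rw [Algebra.algebraMap_eq_smul_one, map_smul, LinearMap.smul_apply,
        hB.one_left, smul_zero]
    | grade1 p => exact h p q
    | mul a c ha hc => rw [hB.1, ha, hc, mul_zero, smul_zero, add_zero]
    | add a c ha hc => rw [map_add, LinearMap.add_apply, ha, hc, add_zero]
  suffices h0 : ∀ a b, B a b = 0 from LinearMap.ext₂ h0
  intro a b
  induction b using FreeAlgebra.induction with
  | grade0 r => rw [Algebra.algebraMap_eq_smul_one, map_smul, hB.one_right, smul_zero]
  | grade1 q => exact h_gen a q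
  | mul c b hc hb => rw [hB.2, hc, hb, zero_mul, smul_zero, add_zero]
  | add c b hc hb => rw [map_add, hc, hb, add_zero]

lemma derivationDefect (hB : IsFoxPairing B) {d : Ass N →ₗ[ℚ] Ass N}
    (hd : ∀ a b, d (a * b) = d a * b + a * d b)
    (hε : ∀ a, algebraMapInv (d a) = 0) : IsFoxPairing (derivationDefect B d) := by
  constructor <;> intro a c b <;>
    simp only [derivationDefect_apply, hd, hB.1, hB.2, map_add, map_smul, LinearMap.add_apply,
      hε, zero_smul, add_zero, mul_sub, sub_mul, smul_sub] <;>
    abel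

end IsFoxPairing

end FoxPairing

section HomotopyIntersectionForm

variable {N : ℕ}

lemma etaGr_wordProd (l r : List (Fin N)) : etaGr N (wordProd l) (wordProd r) = etaWord l r := by
  simp only [etaGr, liftWord_wordProd]

/-- `ι (∂_p (ι b))` is minus the left partial derivative of `b` with respect to `x_p`. -/
lemma etaGr_eq_sum (a b : Ass N) :
    etaGr N a b = ∑ p, partialD p a * gen p * iotaMap N (partialD p (iotaMap N b)) := by
  induction a using induction_on_words with
  | add x y hx hy => simp only [map_add, LinearMap.add_apply, hx, hy, add_mul,
      Finset.sum_add_distrib]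
  | smul r x hx => simp only [map_smul, LinearMap.smul_apply, hx, smul_mul_assoc,
      Finset.smul_sum]
  | word l =>
    induction b using induction_on_words with
    | add x y hx hy => simp only [map_add, hx, hy, mul_add, Finset.sum_add_distrib]
    | smul r x hx => simp only [map_smul, hx, mul_smul_comm, Finset.smul_sum]
    | word r =>
      rw [etaGr_wordProd]
      rcases l.eq_nil_or_concat with rfl | ⟨t, c, rfl⟩
      · simp [etaWord, partialD_one]
      rcases r with _ | ⟨q, s⟩
      · simp [etaWord, iotaMap_one, partialD_one]
      rw [List.concat_eq_append, wordProd_cons, iotaMap_mul, iotaMap_gen, mul_neg,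
        Finset.sum_eq_single c (fun p _ hpc => by
          rw [partialD_wordProd_concat, if_neg (Ne.symm hpc), zero_mul, zero_mul])
          (by simp), partialD_wordProd_concat, if_pos rfl]
      by_cases hcq : c = q
      · subst hcq
        simp [etaWord, partialD_mul_gen, iotaMap_iotaMap, wordProd_append, mul_assoc]
      · simp [etaWord, partialD_mul_gen, hcq, Ne.symm hcq]

lemma iotaMap_partialD_iotaMap_mul (p : Fin N) (c b : Ass N) :
    iotaMap N (partialD p (iotaMap N (c * b))) =
      iotaMap N (partialD p (iotaMap N c)) * b +
        algebraMapInv c • iotaMap N (partialD p (iotaMap N b)) := by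
  rw [iotaMap_mul, partialD_mul, map_add, iotaMap_mul, iotaMap_iotaMap, map_smul,
    algebraMapInv_iotaMap]

lemma isFoxPairing_etaGr : IsFoxPairing (etaGr N) := by
  constructor <;> intro a c b <;>
    simp only [etaGr_eq_sum, partialD_mul, iotaMap_partialD_iotaMap_mul, add_mul, mul_add,
      Finset.sum_add_distrib, Finset.mul_sum, Finset.sum_mul, Finset.smul_sum, smul_mul_assoc,
      mul_smul_comm, mul_assoc]

lemma etaGr_gen_left (p : Fin N) (b : Ass N) :
    etaGr N (gen p) b = gen p * iotaMap N (partialD p (iotaMap N b)) := by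
  simp [etaGr_eq_sum, partialD_gen]

lemma etaGr_gen_right (a : Ass N) (q : Fin N) :
    etaGr N a (gen q) = -(partialD q a * gen q) := by
  simp [etaGr_eq_sum, iotaMap_gen, partialD_gen, apply_ite, iotaMap_one]

lemma etaGr_sum_gen_left (b : Ass N) :
    etaGr N (∑ i, gen i) b = algebraMapInv b • 1 - b := by
  simp only [map_sum, LinearMap.sum_apply, etaGr_gen_left,
    sum_gen_mul_iotaMap_partialD_iotaMap]

lemma etaGr_sum_gen_right (a : Ass N) :
    etaGr N a (∑ i, gen i) = algebraMapInv a • 1 - a := by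
  simp only [map_sum, etaGr_gen_right, Finset.sum_neg_distrib, sum_partialD_mul_gen, neg_sub]

end HomotopyIntersectionForm

section SpecialDerivations

variable {N : ℕ} {u : Fin N → Ass N}

lemma partialD_rho_gen (hu : IsTDer u) (i k : Fin N) :
    partialD i (rho u (gen k)) = gen k * partialD i (u k) - if k = i then u k else 0 := by
  rw [rho_gen, Ring.lie_def, map_sub, partialD_mul, partialD_mul_gen,
    algebraMapInv_eq_zero_of_mem_lieN (hu k), zero_smul, add_zero]

lemma partialD_rho_sum_gen (hu : IsTDer u) (i : Fin N) :
    partialD i (rho u (∑ k, gen k)) =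
      ∑ k, gen k * (partialD i (u k) - iotaMap N (partialD k (u i))) := by
  simp only [map_sum, partialD_rho_gen hu, Finset.sum_sub_distrib, Finset.sum_ite_eq',
    Finset.mem_univ, if_true, mul_sub, sum_gen_mul_iotaMap_partialD_of_mem_lieN (hu i)]

lemma rho_sum_gen_eq_zero_iff (hu : IsTDer u) :
    rho u (∑ i, gen i) = 0 ↔ ∀ i j, partialD j (u i) = iotaMap N (partialD i (u j)) := by
  simp only [eq_zero_iff_forall_partialD_eq_zero (algebraMapInv_rho u _),
    partialD_rho_sum_gen hu]
  refine ⟨fun h i j => sub_eq_zero.mp (eq_zero_of_sum_gen_mul_eq_zero (h j) i), fun h j => ?_⟩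
  exact Finset.sum_eq_zero fun i _ => by rw [h i j, sub_self, mul_zero]

lemma derivationDefect_etaGr_rho_gen_gen (hu : IsTDer u) (p q : Fin N) :
    derivationDefect (etaGr N) (rho u) (gen p) (gen q) =
      gen p * (partialD q (u p) - iotaMap N (partialD p (u q))) * gen q := by
  have hρq : rho u (gen q) ∈ lieN N :=
    rho_gen u q ▸ (lieN N).lie_mem (LieSubalgebra.subset_lieSpan ⟨q, rfl⟩) (hu q)
  rw [derivationDefect_apply, etaGr_gen_right, etaGr_gen_right, etaGr_gen_left,
    iotaMap_eq_neg_of_mem_lieN hρq, map_neg, map_neg, partialD_rho_gen hu, partialD_rho_gen hu,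
    partialD_gen]
  by_cases hpq : p = q
  · subst hpq
    simp only [if_true, one_mul, map_neg, map_sub, iotaMap_mul, iotaMap_gen,
      iotaMap_eq_neg_of_mem_lieN (hu p), rho_gen, Ring.lie_def]
    noncomm_ring
  · simp only [hpq, Ne.symm hpq, if_false, zero_mul, map_zero, neg_zero, sub_zero, map_neg,
      iotaMap_mul, iotaMap_gen]
    noncomm_ring

lemma rho_etaGr_of_partialD_symm (hu : IsTDer u)
    (h : ∀ i j, partialD j (u i) = iotaMap N (partialD i (u j))) (a b : Ass N) :
    rho u (etaGr N a b) = etaGr N (rho u a) b + etaGr N a (rho u b) := by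
  have hD : derivationDefect (etaGr N) (rho u) = 0 :=
    (isFoxPairing_etaGr.derivationDefect (rho_mul u) (algebraMapInv_rho u)).eq_zero fun p q => by
      rw [derivationDefect_etaGr_rho_gen_gen hu, h p q, sub_self, mul_zero, zero_mul]
  have hab := LinearMap.congr_fun₂ hD a b
  rw [derivationDefect_apply, LinearMap.zero_apply, LinearMap.zero_apply, sub_sub,
    sub_eq_zero] at hab
  exact hab

lemma rho_sum_gen_eq_zero_of_rho_etaGr
    (h : ∀ a b, rho u (etaGr N a b) = etaGr N (rho u a) b + etaGr N a (rho u b)) :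
    rho u (∑ i, gen i) = 0 := by
  have hX : algebraMapInv (∑ i, gen i : Ass N) = 0 := by simp [algebraMapInv_gen]
  have h2 := h (∑ i, gen i) (∑ i, gen i)
  rw [etaGr_sum_gen_left, etaGr_sum_gen_left, etaGr_sum_gen_right, hX, algebraMapInv_rho,
    zero_smul, zero_sub, zero_sub, map_neg, left_eq_add, neg_eq_zero] at h2
  exact h2

end SpecialDerivations

/-- characterizations of `sder_n`. -/
theorem statement15 (n : ℕ) (u : Fin n → Ass n) (hu : IsTDer u) :
    ((rho u (∑ i, gen i) = 0) ↔
      (∀ i j : Fin n, partialD j (u i) = iotaMap n (partialD i (u j)))) ∧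
    ((rho u (∑ i, gen i) = 0) ↔
      (∀ a b : Ass n,
        rho u (etaGr n a b) = etaGr n (rho u a) b + etaGr n a (rho u b))) :=
  ⟨rho_sum_gen_eq_zero_iff hu,
    fun h => rho_etaGr_of_partialD_symm hu ((rho_sum_gen_eq_zero_iff hu).mp h),
    rho_sum_gen_eq_zero_of_rho_etaGr⟩

end
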